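/- Let g > 0 and let k ≥ 1 be an integer. For every β < β_k there exists a GP solution φ on [0,L] with parameter β that is not identically zero and has exactly k − 1 interior zeros (i.e., exactly k − 1 points x ∈ (0,L) with φ(x) = 0); moreover −φ is also such a solution, distinct from φ. (Global existence of the branch of quantum states bifurcating from (0, β_k), with nodal structure inherited from the k-th Dirichlet eigenfunction.) -/

import Mathlib

open Set MeasureTheory intervalIntegral Filter Topology

/-- `φ` is a GP solution on `[a,b]` with parameter `β`:
`φ` is continuous on `[a,b]`, twice continuously differentiable on `(a,b)`,
satisfies `-(ℏ²/(4m))·φ'' + (β - ℏλ)·φ + g·φ³ = 0` on `(a,b)`,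
and `φ a = φ b = 0`. -/
def IsGPSolution (ℏ m lam g a b β : ℝ) (φ : ℝ → ℝ) : Prop :=
  ContinuousOn φ (Set.Icc a b) ∧
  ContDiffOn ℝ 2 φ (Set.Ioo a b) ∧
  (∀ x ∈ Set.Ioo a b,
    -(ℏ ^ 2 / (4 * m)) * deriv (deriv φ) x + (β - ℏ * lam) * φ x + g * (φ x) ^ 3 = 0) ∧
  φ a = 0 ∧ φ b = 0

/-- The quantum critical points `β_k = ℏλ - (ℏ²/(4m))·(kπ/L)²`. -/
noncomputable def betaCrit (ℏ m lam L : ℝ) (k : ℕ) : ℝ :=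
  ℏ * lam - (ℏ ^ 2 / (4 * m)) * ((k : ℝ) * Real.pi / L) ^ 2

/-! The solutions are cnoidal waves `φ x = A sn(B x; p)`. Jacobi's `sn` satisfies
`sn'' = -(1 + p²) sn + 2 p² sn³`, so `φ` solves the GP equation as soon as
`(ℏ²/4m) (1 + p²) B² = ℏλ - β` and `g A² = 2 (ℏ²/4m) p² B²`. The zeros of `sn` are the multiples
of `2 K(p)`, so the Dirichlet condition with `k - 1` interior zeros asks for `B L = 2 k K(p)`.
Since `K(p) √(1 + p²)` runs continuously from `π/2` at `p = 0` to `∞` as `p → 1`, both conditions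
can be met whenever `β < β_k`. -/

open Real

section JacobiElliptic

variable {p : ℝ}

noncomputable def ellipticIntegrand (p t : ℝ) : ℝ := 1 / √(1 - p ^ 2 * sin t ^ 2)

/-- The incomplete elliptic integral of the first kind; `p` is the modulus, not the
parameter `p²`. -/
noncomputable def ellipticF (p θ : ℝ) : ℝ := ∫ t in (0 : ℝ)..θ, ellipticIntegrand p t

noncomputable def ellipticK (p : ℝ) : ℝ := ellipticF p (π / 2)

lemma one_sub_sq_mul_sin_sq_pos (hp : p ^ 2 < 1) (t : ℝ) : 0 < 1 - p ^ 2 * sin t ^ 2 := by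
  nlinarith [mul_le_of_le_one_right (sq_nonneg p) (sin_sq_le_one t)]

lemma ellipticIntegrand_pos (hp : p ^ 2 < 1) (t : ℝ) : 0 < ellipticIntegrand p t :=
  one_div_pos.2 (sqrt_pos.2 (one_sub_sq_mul_sin_sq_pos hp t))

lemma one_le_ellipticIntegrand (hp : p ^ 2 < 1) (t : ℝ) : 1 ≤ ellipticIntegrand p t := by
  have hpos := one_sub_sq_mul_sin_sq_pos hp t
  rw [ellipticIntegrand, le_div_iff₀ (sqrt_pos.2 hpos), one_mul, sqrt_le_one]
  nlinarith [sq_nonneg (p * sin t)]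

lemma continuous_ellipticIntegrand (hp : p ^ 2 < 1) : Continuous (ellipticIntegrand p) :=
  continuous_const.div (by fun_prop) fun t => (sqrt_pos.2 (one_sub_sq_mul_sin_sq_pos hp t)).ne'

lemma ellipticIntegrand_periodic : Function.Periodic (ellipticIntegrand p) π := fun t => by
  simp [ellipticIntegrand, sin_add_pi]

lemma ellipticIntegrand_pi_sub (t : ℝ) : ellipticIntegrand p (π - t) = ellipticIntegrand p t := by
  simp [ellipticIntegrand, sin_pi_sub]

lemma intervalIntegrable_ellipticIntegrand (hp : p ^ 2 < 1) (a b : ℝ) :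
    IntervalIntegrable (ellipticIntegrand p) volume a b :=
  (continuous_ellipticIntegrand hp).intervalIntegrable a b

lemma hasDerivAt_ellipticF (hp : p ^ 2 < 1) (θ : ℝ) :
    HasDerivAt (ellipticF p) (ellipticIntegrand p θ) θ :=
  (continuous_ellipticIntegrand hp).integral_hasStrictDerivAt 0 θ |>.hasDerivAt

lemma continuous_ellipticF (hp : p ^ 2 < 1) : Continuous (ellipticF p) :=
  continuous_iff_continuousAt.2 fun θ => (hasDerivAt_ellipticF hp θ).continuousAt

lemma strictMono_ellipticF (hp : p ^ 2 < 1) : StrictMono (ellipticF p) :=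
  strictMono_of_deriv_pos fun θ => by
    rw [(hasDerivAt_ellipticF hp θ).deriv]; exact ellipticIntegrand_pos hp θ

lemma self_le_ellipticF (hp : p ^ 2 < 1) {θ : ℝ} (hθ : 0 ≤ θ) : θ ≤ ellipticF p θ := by
  calc θ = ∫ _ in (0 : ℝ)..θ, (1 : ℝ) := by simp
    _ ≤ ellipticF p θ := intervalIntegral.integral_mono_on hθ (by simp)
        (intervalIntegrable_ellipticIntegrand hp 0 θ) fun t _ => one_le_ellipticIntegrand hp t

lemma ellipticF_le_self (hp : p ^ 2 < 1) {θ : ℝ} (hθ : θ ≤ 0) : ellipticF p θ ≤ θ := by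
  have h : ∫ _ in θ..(0 : ℝ), (1 : ℝ) ≤ ∫ t in θ..(0 : ℝ), ellipticIntegrand p t :=
    intervalIntegral.integral_mono_on hθ (by simp)
      (intervalIntegrable_ellipticIntegrand hp θ 0) fun t _ => one_le_ellipticIntegrand hp t
  rw [ellipticF, intervalIntegral.integral_symm]
  simp only [intervalIntegral.integral_const, smul_eq_mul, mul_one] at h
  linarith

lemma ellipticF_surjective (hp : p ^ 2 < 1) : Function.Surjective (ellipticF p) :=
  (continuous_ellipticF hp).surjective
    (tendsto_atTop_mono' _ (eventually_ge_atTop 0 |>.mono fun _ => self_le_ellipticF hp)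
      tendsto_id)
    (tendsto_atBot_mono' _ (eventually_le_atBot 0 |>.mono fun _ => ellipticF_le_self hp)
      tendsto_id)

lemma ellipticF_pi (hp : p ^ 2 < 1) : ellipticF p π = 2 * ellipticK p := by
  have hsymm : ∫ t in (π / 2)..π, ellipticIntegrand p t = ellipticK p := by
    simpa [ellipticK, ellipticF, ellipticIntegrand_pi_sub, show π - π / 2 = π / 2 by ring] using
      (intervalIntegral.integral_comp_sub_left (ellipticIntegrand p) π (a := 0) (b := π / 2)).symm
  rw [ellipticF, ← intervalIntegral.integral_add_adjacent_intervals
    (intervalIntegrable_ellipticIntegrand hp 0 (π / 2))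
    (intervalIntegrable_ellipticIntegrand hp (π / 2) π), hsymm, ← ellipticF, ← ellipticK]
  ring

lemma ellipticF_add_pi (hp : p ^ 2 < 1) (θ : ℝ) :
    ellipticF p (θ + π) = ellipticF p θ + 2 * ellipticK p := by
  rw [← ellipticF_pi hp, ellipticF, ellipticF, ellipticF,
    ← intervalIntegral.integral_add_adjacent_intervals
      (intervalIntegrable_ellipticIntegrand hp 0 θ)
      (intervalIntegrable_ellipticIntegrand hp θ (θ + π)),
    ellipticIntegrand_periodic.intervalIntegral_add_eq θ 0, zero_add]

lemma ellipticF_int_mul_pi (hp : p ^ 2 < 1) (n : ℤ) :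
    ellipticF p (n * π) = 2 * n * ellipticK p := by
  have hper : Function.Periodic (fun θ => ellipticF p θ - 2 * ellipticK p / π * θ) π :=
    fun θ => by
      simp only [ellipticF_add_pi hp]
      field_simp
      ring
  have h := hper.int_mul_eq n
  simp only [ellipticF, intervalIntegral.integral_same, mul_zero, sub_zero, sub_eq_zero] at h
  rw [ellipticF, h]
  field_simp

lemma ellipticK_pos (hp : p ^ 2 < 1) : 0 < ellipticK p :=
  (by positivity : (0 : ℝ) < π / 2).trans_le (self_le_ellipticF hp (by positivity))

noncomputable def jacobiAm (p : ℝ) : ℝ → ℝ := Function.invFun (ellipticF p)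

lemma jacobiAm_ellipticF (hp : p ^ 2 < 1) (θ : ℝ) : jacobiAm p (ellipticF p θ) = θ :=
  Function.leftInverse_invFun (strictMono_ellipticF hp).injective θ

lemma ellipticF_jacobiAm (hp : p ^ 2 < 1) (x : ℝ) : ellipticF p (jacobiAm p x) = x :=
  Function.rightInverse_invFun (ellipticF_surjective hp) x

lemma continuous_jacobiAm (hp : p ^ 2 < 1) : Continuous (jacobiAm p) := by
  refine Monotone.continuous_of_surjective (fun x y hxy => ?_)
    fun θ => ⟨ellipticF p θ, jacobiAm_ellipticF hp θ⟩
  rwa [← (strictMono_ellipticF hp).le_iff_le, ellipticF_jacobiAm hp, ellipticF_jacobiAm hp]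

noncomputable def jacobiSn (p x : ℝ) : ℝ := sin (jacobiAm p x)

noncomputable def jacobiCn (p x : ℝ) : ℝ := cos (jacobiAm p x)

noncomputable def jacobiDn (p x : ℝ) : ℝ := √(1 - p ^ 2 * jacobiSn p x ^ 2)

lemma jacobiDn_pos (hp : p ^ 2 < 1) (x : ℝ) : 0 < jacobiDn p x :=
  sqrt_pos.2 (one_sub_sq_mul_sin_sq_pos hp _)

lemma jacobiDn_sq (hp : p ^ 2 < 1) (x : ℝ) : jacobiDn p x ^ 2 = 1 - p ^ 2 * jacobiSn p x ^ 2 :=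
  sq_sqrt (one_sub_sq_mul_sin_sq_pos hp _).le

lemma jacobiSn_sq_add_jacobiCn_sq (p x : ℝ) : jacobiSn p x ^ 2 + jacobiCn p x ^ 2 = 1 :=
  sin_sq_add_cos_sq _

lemma hasDerivAt_jacobiAm (hp : p ^ 2 < 1) (x : ℝ) :
    HasDerivAt (jacobiAm p) (jacobiDn p x) x := by
  have h := (hasDerivAt_ellipticF hp (jacobiAm p x)).of_local_left_inverse
    (continuous_jacobiAm hp).continuousAt (ellipticIntegrand_pos hp _).ne'
    (Eventually.of_forall (ellipticF_jacobiAm hp))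
  rwa [ellipticIntegrand, one_div, inv_inv] at h

lemma hasDerivAt_jacobiSn (hp : p ^ 2 < 1) (x : ℝ) :
    HasDerivAt (jacobiSn p) (jacobiCn p x * jacobiDn p x) x :=
  (hasDerivAt_sin _).comp x (hasDerivAt_jacobiAm hp x)

lemma hasDerivAt_jacobiCn (hp : p ^ 2 < 1) (x : ℝ) :
    HasDerivAt (jacobiCn p) (-jacobiSn p x * jacobiDn p x) x :=
  (hasDerivAt_cos _).comp x (hasDerivAt_jacobiAm hp x)

lemma hasDerivAt_jacobiDn (hp : p ^ 2 < 1) (x : ℝ) :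
    HasDerivAt (jacobiDn p) (-p ^ 2 * jacobiSn p x * jacobiCn p x) x := by
  refine (((hasDerivAt_jacobiSn hp x).pow 2 |>.const_mul (p ^ 2) |>.const_sub 1).sqrt
    (one_sub_sq_mul_sin_sq_pos hp _).ne').congr_deriv ?_
  rw [show √(1 - p ^ 2 * (jacobiSn p ^ 2) x) = jacobiDn p x from rfl]
  field_simp [(jacobiDn_pos hp x).ne']
  ring

lemma hasDerivAt_jacobiCn_mul_jacobiDn (hp : p ^ 2 < 1) (x : ℝ) :
    HasDerivAt (fun y => jacobiCn p y * jacobiDn p y)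
      (-(1 + p ^ 2) * jacobiSn p x + 2 * p ^ 2 * jacobiSn p x ^ 3) x := by
  refine ((hasDerivAt_jacobiCn hp x).mul (hasDerivAt_jacobiDn hp x)).congr_deriv ?_
  linear_combination -jacobiSn p x * jacobiDn_sq hp x -
    p ^ 2 * jacobiSn p x * jacobiSn_sq_add_jacobiCn_sq p x

lemma contDiff_jacobiSn (hp : p ^ 2 < 1) : ContDiff ℝ 2 (jacobiSn p) := by
  have hsn : Continuous (jacobiSn p) := continuous_sin.comp (continuous_jacobiAm hp)
  rw [show (2 : WithTop ℕ∞) = 1 + 1 from rfl, contDiff_succ_iff_deriv]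
  refine ⟨fun x => (hasDerivAt_jacobiSn hp x).differentiableAt, by simp, ?_⟩
  rw [funext fun x => (hasDerivAt_jacobiSn hp x).deriv, contDiff_one_iff_deriv,
    funext fun x => (hasDerivAt_jacobiCn_mul_jacobiDn hp x).deriv]
  exact ⟨fun x => (hasDerivAt_jacobiCn_mul_jacobiDn hp x).differentiableAt, by fun_prop⟩

lemma jacobiSn_zero (hp : p ^ 2 < 1) : jacobiSn p 0 = 0 := by
  simpa [jacobiSn, ellipticF] using congrArg sin (jacobiAm_ellipticF hp 0)

lemma jacobiSn_ellipticK (hp : p ^ 2 < 1) : jacobiSn p (ellipticK p) = 1 := by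
  rw [jacobiSn, ellipticK, jacobiAm_ellipticF hp, sin_pi_div_two]

lemma jacobiSn_eq_zero_iff (hp : p ^ 2 < 1) {x : ℝ} :
    jacobiSn p x = 0 ↔ ∃ n : ℤ, x = 2 * n * ellipticK p := by
  rw [jacobiSn, sin_eq_zero_iff]
  refine exists_congr fun n => ⟨fun h => ?_, fun h => ?_⟩
  · rw [← ellipticF_int_mul_pi hp, h, ellipticF_jacobiAm hp]
  · rw [h, ← ellipticF_int_mul_pi hp, jacobiAm_ellipticF hp]

lemma ellipticK_zero : ellipticK 0 = π / 2 := by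
  simp [ellipticK, ellipticF, ellipticIntegrand]

lemma continuousOn_ellipticK : ContinuousOn ellipticK {p | p ^ 2 < 1} := by
  rw [continuousOn_iff_continuous_domRestrict]
  refine intervalIntegral.continuous_parametric_intervalIntegral_of_continuous'
    (f := fun (q : {p : ℝ | p ^ 2 < 1}) t => ellipticIntegrand q t) ?_ 0 (π / 2)
  exact continuous_const.div (by fun_prop) fun z =>
    (sqrt_pos.2 (one_sub_sq_mul_sin_sq_pos z.1.2 z.2)).ne'

/-- On `[0, π/2]` one has `√(1 - p² sin² t) ≤ cos t + √(1 - p²) ≤ π/2 - t + √(1 - p²)`, whose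
reciprocal integrates to the logarithm below; so `K p → ∞` as `p² → 1`. -/
lemma log_le_ellipticK (hp : p ^ 2 < 1) :
    log ((π / 2 + √(1 - p ^ 2)) / √(1 - p ^ 2)) ≤ ellipticK p := by
  set c := √(1 - p ^ 2)
  have hc : 0 < c := sqrt_pos.2 (by linarith)
  have hc2 : c ^ 2 = 1 - p ^ 2 := sq_sqrt (by linarith)
  have hbound : ∀ t ∈ Icc 0 (π / 2), 1 / (π / 2 - t + c) ≤ ellipticIntegrand p t := by
    rintro t ⟨ht0, htπ⟩
    have hcos : 0 ≤ cos t := cos_nonneg_of_mem_Icc ⟨by linarith [pi_pos], htπ⟩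
    have hsqrt : √(1 - p ^ 2 * sin t ^ 2) ≤ cos t + c := by
      rw [sqrt_le_left (by positivity)]
      nlinarith [sin_sq_add_cos_sq t, sin_sq_le_one t, mul_nonneg hc.le hcos]
    have hcos_le : cos t ≤ π / 2 - t := by
      simpa [sin_pi_div_two_sub] using sin_le (x := π / 2 - t) (by linarith)
    exact one_div_le_one_div_of_le (sqrt_pos.2 (one_sub_sq_mul_sin_sq_pos hp t)) (by linarith)
  have hint : ∫ t in (0 : ℝ)..π / 2, 1 / (π / 2 - t + c) = log ((π / 2 + c) / c) := by
    rw [intervalIntegral.integral_comp_sub_left (fun u => 1 / (u + c)),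
      intervalIntegral.integral_comp_add_right (fun u => 1 / u), integral_one_div]
    · ring_nf
    · rintro h
      rw [uIcc_of_le (by linarith [pi_pos])] at h
      linarith [h.1]
  rw [← hint]
  refine intervalIntegral.integral_mono_on (by positivity) ?_
    (intervalIntegrable_ellipticIntegrand hp _ _) hbound
  refine ContinuousOn.intervalIntegrable (continuousOn_const.div (by fun_prop) fun t ht => ?_)
  rw [uIcc_of_le (by positivity)] at ht
  linarith [ht.2]

lemma exists_le_ellipticK (M : ℝ) : ∃ p, 0 ≤ p ∧ p ^ 2 < 1 ∧ M ≤ ellipticK p := by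
  set c := min (1 / 2) (π / 2 * exp (-M))
  have hc : 0 < c := lt_min (by norm_num) (by positivity)
  have hc1 : c < 1 := (min_le_left _ _).trans_lt (by norm_num)
  have hp : √(1 - c ^ 2) ^ 2 = 1 - c ^ 2 := sq_sqrt (by nlinarith)
  refine ⟨√(1 - c ^ 2), sqrt_nonneg _, by nlinarith, le_trans ?_ (log_le_ellipticK (by nlinarith))⟩
  rw [hp, sub_sub_cancel, sqrt_sq hc.le, le_log_iff_exp_le (by positivity), le_div_iff₀ hc]
  have hcM : exp M * c ≤ π / 2 := by
    calc exp M * c ≤ exp M * (π / 2 * exp (-M)) := by gcongr; exact min_le_right _ _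
      _ = π / 2 := by rw [mul_left_comm, ← exp_add, add_neg_cancel, exp_zero, mul_one]
  linarith

lemma exists_ellipticK_mul_sqrt_eq {M : ℝ} (hM : π / 2 < M) :
    ∃ p, 0 < p ∧ p ^ 2 < 1 ∧ ellipticK p * √(1 + p ^ 2) = M := by
  obtain ⟨p₀, hp₀, hp₀1, hMK⟩ := exists_le_ellipticK M
  have hsub : Icc 0 p₀ ⊆ {p : ℝ | p ^ 2 < 1} := fun q hq => by
    show q ^ 2 < 1; nlinarith [hq.1, hq.2]
  have hcont : ContinuousOn (fun q => ellipticK q * √(1 + q ^ 2)) (Icc 0 p₀) :=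
    (continuousOn_ellipticK.mono hsub).mul (by fun_prop)
  have hMp₀ : M ≤ ellipticK p₀ * √(1 + p₀ ^ 2) :=
    hMK.trans (le_mul_of_one_le_right (ellipticK_pos hp₀1).le (one_le_sqrt.2 (by nlinarith)))
  obtain ⟨p, hp, hpM⟩ := intermediate_value_Icc hp₀ hcont
    ⟨by simpa [ellipticK_zero] using hM.le, hMp₀⟩
  have hp0 : p ≠ 0 := by
    rintro rfl
    simp [ellipticK_zero] at hpM
    linarith
  exact ⟨p, lt_of_le_of_ne hp.1 (Ne.symm hp0), hsub hp, hpM⟩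

end JacobiElliptic

section CnoidalWave

variable {p : ℝ}

lemma exists_jacobiSn_period_match {ω L : ℝ} (hL : 0 < L) {k : ℕ} (hk : 0 < k)
    (hω : k * π / L < ω) :
    ∃ p B, 0 < p ∧ p ^ 2 < 1 ∧ (1 + p ^ 2) * B ^ 2 = ω ^ 2 ∧ B * L = 2 * k * ellipticK p := by
  have hk' : (0 : ℝ) < k := by exact_mod_cast hk
  obtain ⟨p, hp0, hp, hpK⟩ := exists_ellipticK_mul_sqrt_eq (M := ω * L / (2 * k)) (by
    rw [lt_div_iff₀ (by positivity)]
    rw [div_lt_iff₀ hL] at hω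
    linarith)
  refine ⟨p, 2 * k * ellipticK p / L, hp0, hp, ?_, by field_simp⟩
  have h1p : √(1 + p ^ 2) ^ 2 = 1 + p ^ 2 := sq_sqrt (by positivity)
  have hω' : ω = 2 * k * (ellipticK p * √(1 + p ^ 2)) / L := by rw [hpK]; field_simp
  rw [hω']
  linear_combination (-(2 * k * ellipticK p / L) ^ 2) * h1p

lemma hasDerivAt_mul_jacobiSn_mul (hp : p ^ 2 < 1) (A B x : ℝ) :
    HasDerivAt (fun y => A * jacobiSn p (B * y))
      (A * B * (jacobiCn p (B * x) * jacobiDn p (B * x))) x := by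
  have h := ((hasDerivAt_jacobiSn hp (B * x)).comp x ((hasDerivAt_id x).const_mul B)).const_mul A
  exact h.congr_deriv (by simp only [mul_one]; ring)

lemma deriv_deriv_mul_jacobiSn_mul (hp : p ^ 2 < 1) (A B x : ℝ) :
    deriv (deriv fun y => A * jacobiSn p (B * y)) x =
      A * B ^ 2 * (-(1 + p ^ 2) * jacobiSn p (B * x) + 2 * p ^ 2 * jacobiSn p (B * x) ^ 3) := by
  rw [funext fun y => (hasDerivAt_mul_jacobiSn_mul hp A B y).deriv]
  have h := ((hasDerivAt_jacobiCn_mul_jacobiDn hp (B * x)).comp x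
    ((hasDerivAt_id x).const_mul B)).const_mul (A * B)
  exact (h.congr_deriv (by simp only [mul_one]; ring)).deriv

lemma mul_jacobiSn_mul_eq_zero_iff (hp : p ^ 2 < 1) {A B : ℝ} (hA : A ≠ 0) (hB : B ≠ 0)
    {x : ℝ} : A * jacobiSn p (B * x) = 0 ↔ ∃ n : ℤ, x = n * (2 * ellipticK p / B) := by
  rw [mul_eq_zero, or_iff_right hA, jacobiSn_eq_zero_iff hp]
  refine exists_congr fun n => ?_
  rw [mul_div_assoc', eq_div_iff hB]
  constructor <;> intro h <;> linarith

lemma isGPSolution_mul_jacobiSn_mul {ℏ m lam g L β A B : ℝ} (hp : p ^ 2 < 1)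
    (hB : ℏ ^ 2 / (4 * m) * ((1 + p ^ 2) * B ^ 2) = ℏ * lam - β)
    (hA : g * A ^ 2 = ℏ ^ 2 / (4 * m) * (2 * p ^ 2 * B ^ 2)) {n : ℤ}
    (hBL : B * L = 2 * n * ellipticK p) :
    IsGPSolution ℏ m lam g 0 L β (fun x => A * jacobiSn p (B * x)) := by
  have hφ : ContDiff ℝ 2 fun x => A * jacobiSn p (B * x) :=
    contDiff_const.mul ((contDiff_jacobiSn hp).comp (contDiff_const.mul contDiff_id))
  refine ⟨hφ.continuous.continuousOn, hφ.contDiffOn, fun x _ => ?_, ?_, ?_⟩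
  · rw [deriv_deriv_mul_jacobiSn_mul hp]
    linear_combination (A * jacobiSn p (B * x)) * hB + (A * jacobiSn p (B * x) ^ 3) * hA
  · simp [jacobiSn_zero hp]
  · simp [hBL, jacobiSn_eq_zero_iff hp]

end CnoidalWave

lemma IsGPSolution.neg {ℏ m lam g a b β : ℝ} {φ : ℝ → ℝ}
    (h : IsGPSolution ℏ m lam g a b β φ) : IsGPSolution ℏ m lam g a b β (fun x => -φ x) := by
  obtain ⟨hc, hd, heq, ha, hb⟩ := h
  refine ⟨hc.neg, hd.neg, fun x hx => ?_, by simp [ha], by simp [hb]⟩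
  have hneg : deriv (deriv fun y => -φ y) x = -deriv (deriv φ) x := by
    rw [show deriv (fun y => -φ y) = fun y => -deriv φ y from funext fun _ => deriv.neg]
    exact deriv.neg
  rw [hneg]
  linear_combination -heq x hx

lemma sep_Ioo_eq_image_int_mul {φ : ℝ → ℝ} {d : ℝ} (hd : 0 < d) (k : ℕ)
    (hφ : ∀ x, φ x = 0 ↔ ∃ n : ℤ, x = n * d) :
    {x ∈ Ioo 0 (k * d) | φ x = 0} = (fun n : ℤ => n * d) '' Ioo 0 k := by
  ext x
  simp only [hφ, mem_Ioo, mem_image]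
  constructor
  · rintro ⟨⟨hx0, hxk⟩, n, rfl⟩
    exact ⟨n, ⟨by exact_mod_cast pos_of_mul_pos_left hx0 hd.le,
      by exact_mod_cast lt_of_mul_lt_mul_right hxk hd.le⟩, rfl⟩
  · rintro ⟨n, ⟨hn0, hnk⟩, rfl⟩
    refine ⟨⟨by positivity, ?_⟩, n, rfl⟩
    exact mul_lt_mul_of_pos_right (by exact_mod_cast hnk) hd

lemma ncard_image_int_mul_Ioo {d : ℝ} (hd : d ≠ 0) (k : ℕ) :
    ((fun n : ℤ => n * d) '' Ioo 0 k).ncard = k - 1 := by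
  rw [ncard_image_of_injective _ fun a b h => by exact_mod_cast mul_right_cancel₀ hd h,
    ← Finset.coe_Ioo, ncard_coe_finset, Int.card_Ioo]
  omega

lemma exists_frequency_of_lt_betaCrit {ℏ m lam L β : ℝ} {k : ℕ} (hℏ : 0 < ℏ) (hm : 0 < m)
    (hL : 0 < L) (hβ : β < betaCrit ℏ m lam L k) :
    ∃ ω, k * π / L < ω ∧ ℏ ^ 2 / (4 * m) * ω ^ 2 = ℏ * lam - β := by
  set C := ℏ ^ 2 / (4 * m)
  have hC : 0 < C := by positivity
  have hgap : C * (k * π / L) ^ 2 < ℏ * lam - β := by rw [betaCrit] at hβ; linarith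
  have hratio : 0 < (ℏ * lam - β) / C :=
    div_pos ((by positivity : 0 ≤ C * (k * π / L) ^ 2).trans_lt hgap) hC
  refine ⟨√((ℏ * lam - β) / C), (lt_sqrt (by positivity)).2 ?_, ?_⟩
  · rw [lt_div_iff₀ hC]; linarith
  · rw [sq_sqrt hratio.le]; field_simp

/-- global existence of the branch of quantum states bifurcating from
`(0, β_k)`, with the nodal structure of the `k`-th Dirichlet eigenfunction. -/
theorem stmt_12 (ℏ m lam L g : ℝ) (hℏ : 0 < ℏ) (hm : 0 < m) (hL : 0 < L)
    (hg : 0 < g) (k : ℕ) (hk : 1 ≤ k) (β : ℝ) (hβ : β < betaCrit ℏ m lam L k) :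
    ∃ φ : ℝ → ℝ,
      IsGPSolution ℏ m lam g 0 L β φ ∧
      (∃ x ∈ Set.Icc (0:ℝ) L, φ x ≠ 0) ∧
      {x ∈ Set.Ioo (0:ℝ) L | φ x = 0}.Finite ∧
      {x ∈ Set.Ioo (0:ℝ) L | φ x = 0}.ncard = k - 1 ∧
      IsGPSolution ℏ m lam g 0 L β (fun x => -φ x) ∧
      (∃ x ∈ Set.Icc (0:ℝ) L, φ x ≠ -φ x) := by
  set C := ℏ ^ 2 / (4 * m)
  obtain ⟨ω, hω, hωsq⟩ := exists_frequency_of_lt_betaCrit hℏ hm hL hβ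
  obtain ⟨p, B, hp0, hp, hpB, hBL⟩ := exists_jacobiSn_period_match hL hk hω
  have hB : 0 < B := pos_of_mul_pos_left (hBL ▸ by positivity [ellipticK_pos hp]) hL.le
  set A := √(C * (2 * p ^ 2 * B ^ 2) / g)
  have hA : 0 < A := sqrt_pos.2 (by positivity)
  set φ := fun x => A * jacobiSn p (B * x)
  have hsol : IsGPSolution ℏ m lam g 0 L β φ :=
    isGPSolution_mul_jacobiSn_mul hp (by rw [hpB, hωsq])
      (by rw [sq_sqrt (by positivity)]; exact mul_div_cancel₀ _ hg.ne') (n := k)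
      (by exact_mod_cast hBL)
  have hmid : L / (2 * k) ∈ Icc 0 L := ⟨by positivity, div_le_self hL.le (by norm_cast; omega)⟩
  have hpeak : φ (L / (2 * k)) = A := by
    have hK : B * (L / (2 * k)) = ellipticK p := by
      rw [← mul_div_assoc, hBL]; field_simp
    simp only [φ, hK, jacobiSn_ellipticK hp, mul_one]
  have hd : 0 < 2 * ellipticK p / B := div_pos (by positivity [ellipticK_pos hp]) hB
  have hzeros :
      {x ∈ Ioo 0 L | φ x = 0} = (fun n : ℤ => n * (2 * ellipticK p / B)) '' Ioo 0 k := by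
    rw [show L = k * (2 * ellipticK p / B) by field_simp; linarith]
    exact sep_Ioo_eq_image_int_mul hd k fun x => mul_jacobiSn_mul_eq_zero_iff hp hA.ne' hB.ne'
  refine ⟨φ, hsol, ⟨_, hmid, hpeak ▸ hA.ne'⟩, hzeros ▸ (finite_Ioo _ _).image _,
    hzeros ▸ ncard_image_int_mul_Ioo hd.ne' k, hsol.neg, ⟨_, hmid, ?_⟩⟩
  rw [hpeak]
  linarith
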